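/- Let α > 0, let c > 0, and set t = c·n^α. Then sup{ |ρ(x,t) - ρ(y,t)| : x,y ∈ ℝ², ‖x-y‖_∞ ≤ n^a, ‖x‖_∞, ‖y‖_∞ ≤ n, ‖x‖_∞, ‖y‖_∞ > 0 } → 0 as n → ∞, for any fixed 0 < a < 1. -/
import Mathlib

open Real Filter

/-- `ρ(x,t) = 1 - exp(-t‖x‖_∞^{-α})`; `ℝ × ℝ` carries the sup norm. -/
noncomputable def rho (α : ℝ) (x : ℝ × ℝ) (t : ℝ) : ℝ :=
  1 - Real.exp (-t * ‖x‖ ^ (-α))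

lemma exp_sub_exp_le' {u v : ℝ} (hu : 0 ≤ u) (huv : u ≤ v) :
    Real.exp (-u) - Real.exp (-v) ≤ v - u := by
  have h1 : Real.exp (-u) * Real.exp (u - v) = Real.exp (-v) := by
    rw [← Real.exp_add]; ring_nf
  have h2 : u - v + 1 ≤ Real.exp (u - v) := Real.add_one_le_exp _
  have h3 : Real.exp (-u) ≤ 1 := Real.exp_le_one_iff.mpr (by linarith)
  have h4 : Real.exp (u - v) ≤ 1 := Real.exp_le_one_iff.mpr (by linarith)
  nlinarith [Real.exp_pos (-u), Real.exp_pos (u - v)]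

lemma one_sub_rpow_le' {q α : ℝ} (hq0 : 0 < q) (hq1 : q ≤ 1) (hα : 0 < α) :
    1 - q ^ α ≤ max 1 α * (1 - q) := by
  rcases le_total α 1 with h | h
  · have h1 : q ^ (1 : ℝ) ≤ q ^ α := Real.rpow_le_rpow_of_exponent_ge hq0 hq1 h
    rw [Real.rpow_one] at h1
    have hm : 1 ≤ max 1 α := le_max_left _ _
    nlinarith
  · have hb := one_add_mul_self_le_rpow_one_add (s := q - 1) (by linarith) h
    rw [add_sub_cancel] at hb
    have hm : α ≤ max 1 α := le_max_right _ _
    nlinarith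

lemma key_est (α c a b : ℝ) (hα : 0 < α) (hc : 0 < c) (hab : a ≤ b)
    (n : ℝ) (hn : 1 ≤ n) (x y : ℝ × ℝ)
    (hx : 0 < ‖x‖) (hy : 0 < ‖y‖) (hd : ‖x - y‖ ≤ n ^ a) (hyx : ‖y‖ ≤ ‖x‖) :
    |rho α x (c * n ^ α) - rho α y (c * n ^ α)| ≤
      c * max 1 α * n ^ (α + a - b * (α + 1)) +
        2 * Real.exp (-(c * 2 ^ (-α)) * n ^ ((1 - b) * α)) := by
  set r := ‖x‖ with hr
  set s := ‖y‖ with hs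
  have hn0 : (0 : ℝ) < n := lt_of_lt_of_le one_pos hn
  have ht : 0 < c * n ^ α := by positivity
  have hnb : 0 < n ^ b := Real.rpow_pos_of_pos hn0 b
  have hna : 0 < n ^ a := Real.rpow_pos_of_pos hn0 a
  have hru : r ^ (-α) ≤ s ^ (-α) :=
    Real.rpow_le_rpow_of_nonpos hy hyx (by linarith)
  set u := c * n ^ α * r ^ (-α) with hu
  set v := c * n ^ α * s ^ (-α) with hv
  have hu0 : 0 ≤ u := by positivity
  have huv : u ≤ v := mul_le_mul_of_nonneg_left hru ht.le
  have hval : rho α y (c * n ^ α) - rho α x (c * n ^ α) =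
      Real.exp (-u) - Real.exp (-v) := by
    unfold rho
    rw [hu, hv, ← hr, ← hs]
    ring_nf
  have hE : Real.exp (-v) ≤ Real.exp (-u) := Real.exp_le_exp.mpr (by linarith)
  have habs : |rho α x (c * n ^ α) - rho α y (c * n ^ α)| =
      Real.exp (-u) - Real.exp (-v) := by
    rw [abs_sub_comm, abs_of_nonneg (by rw [hval]; linarith), hval]
  have hterm1 : 0 ≤ c * max 1 α * n ^ (α + a - b * (α + 1)) := by positivity
  rcases le_or_gt s (n ^ b) with hcase | hcase
  · -- both norms small: both exponentials tiny
    have hrb : r ≤ 2 * n ^ b := by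
      have h1 : r - s ≤ ‖x - y‖ := by
        have := norm_sub_norm_le x y
        simpa [← hr, ← hs] using this
      have h2 : n ^ a ≤ n ^ b := Real.rpow_le_rpow_of_exponent_le hn hab
      linarith
    have h3 : (2 * n ^ b) ^ (-α) ≤ r ^ (-α) :=
      Real.rpow_le_rpow_of_nonpos hx hrb (by linarith)
    have hcomp : c * n ^ α * (2 * n ^ b) ^ (-α) = c * 2 ^ (-α) * n ^ ((1 - b) * α) := by
      rw [Real.mul_rpow (by norm_num) (Real.rpow_nonneg hn0.le b), ← Real.rpow_mul hn0.le,
        show (1 - b) * α = α + b * (-α) by ring, Real.rpow_add hn0]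
      ring
    have h4 : Real.exp (-u) ≤ Real.exp (-(c * 2 ^ (-α)) * n ^ ((1 - b) * α)) := by
      rw [neg_mul, ← hcomp]
      exact Real.exp_le_exp.mpr (by nlinarith [mul_le_mul_of_nonneg_left h3 ht.le])
    have h5 : 0 < Real.exp (-v) := Real.exp_pos _
    rw [habs]
    linarith
  · -- both norms large: Lipschitz estimate
    have hrbig : n ^ b < r := lt_of_lt_of_le hcase hyx
    have hlip : Real.exp (-u) - Real.exp (-v) ≤ v - u := exp_sub_exp_le' hu0 huv
    have hq0 : 0 < s / r := div_pos hy hx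
    have hq1 : s / r ≤ 1 := (div_le_one hx).mpr hyx
    have hber := one_sub_rpow_le' hq0 hq1 hα
    have h1 : s ^ (-α) * s ^ α = 1 := by
      rw [← Real.rpow_add hy]; simp
    have h2 : (s / r) ^ α = s ^ α * r ^ (-α) := by
      rw [Real.div_rpow hy.le hx.le, Real.rpow_neg hx.le]; ring
    have hsplit : s ^ (-α) - r ^ (-α) = s ^ (-α) * (1 - (s / r) ^ α) := by
      rw [h2]
      linear_combination (r : ℝ) ^ (-α) * h1
    have hqd : 1 - s / r ≤ n ^ (a - b) := by
      have hrs : r - s ≤ n ^ a := by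
        have := norm_sub_norm_le x y
        simp only [← hr, ← hs] at this
        linarith
      have h5 : 1 - s / r = (r - s) / r := by field_simp
      have h6 : (r - s) / r ≤ n ^ a / n ^ b :=
        div_le_div₀ hna.le hrs hnb hrbig.le
      rw [h5, ← Real.rpow_sub hn0] at *
      linarith
    have hsa : s ^ (-α) ≤ n ^ (b * (-α)) := by
      rw [Real.rpow_mul hn0.le]
      exact Real.rpow_le_rpow_of_nonpos hnb hcase.le (by linarith)
    have hM0 : (0 : ℝ) ≤ max 1 α := by positivity
    have hs0 : (0 : ℝ) ≤ s ^ (-α) := Real.rpow_nonneg hy.le _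
    have hbound : s ^ (-α) - r ^ (-α) ≤ n ^ (b * (-α)) * (max 1 α * n ^ (a - b)) := by
      rw [hsplit]
      have hle2 : max 1 α * (1 - s / r) ≤ max 1 α * n ^ (a - b) :=
        mul_le_mul_of_nonneg_left hqd hM0
      calc s ^ (-α) * (1 - (s / r) ^ α)
          ≤ s ^ (-α) * (max 1 α * n ^ (a - b)) :=
            mul_le_mul_of_nonneg_left (hber.trans hle2) hs0
        _ ≤ n ^ (b * (-α)) * (max 1 α * n ^ (a - b)) :=
            mul_le_mul_of_nonneg_right hsa (by positivity)
    have hvu : v - u ≤ c * max 1 α * n ^ (α + a - b * (α + 1)) := by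
      have heq : v - u = c * n ^ α * (s ^ (-α) - r ^ (-α)) := by
        rw [hu, hv]; ring
      rw [heq]
      calc c * n ^ α * (s ^ (-α) - r ^ (-α))
          ≤ c * n ^ α * (n ^ (b * (-α)) * (max 1 α * n ^ (a - b))) :=
            mul_le_mul_of_nonneg_left hbound ht.le
        _ = c * max 1 α * n ^ (α + a - b * (α + 1)) := by
            rw [show α + a - b * (α + 1) = α + (b * (-α) + (a - b)) by ring,
              Real.rpow_add hn0, Real.rpow_add hn0]
            ring
    have h5 : 0 < Real.exp (-(c * 2 ^ (-α)) * n ^ ((1 - b) * α)) := Real.exp_pos _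
    rw [habs]
    linarith

theorem stmt3 (α c a : ℝ) (hα : 0 < α) (hc : 0 < c) (ha0 : 0 < a) (ha1 : a < 1) :
    ∀ ε > 0, ∃ N : ℝ, ∀ n ≥ N, ∀ x y : ℝ × ℝ,
      0 < ‖x‖ → 0 < ‖y‖ → ‖x‖ ≤ n → ‖y‖ ≤ n → ‖x - y‖ ≤ n ^ a →
      |rho α x (c * n ^ α) - rho α y (c * n ^ α)| < ε := by
  intro ε hε
  set b := ((α + a) / (α + 1) + 1) / 2 with hbdef
  have hα1 : (0 : ℝ) < α + 1 := by linarith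
  have hpa : a ≤ (α + a) / (α + 1) := by
    rw [le_div_iff₀ hα1]; nlinarith
  have hp1 : (α + a) / (α + 1) < 1 := by
    rw [div_lt_one hα1]; linarith
  have hab : a ≤ b := by rw [hbdef]; linarith
  have hb1 : b < 1 := by rw [hbdef]; linarith
  have hβ : α + a - b * (α + 1) < 0 := by
    have hpb : (α + a) / (α + 1) < b := by rw [hbdef]; linarith
    have := (div_lt_iff₀ hα1).mp hpb
    linarith
  have hγ : 0 < (1 - b) * α := mul_pos (by linarith) hα
  have h1 : Tendsto (fun n : ℝ => c * max 1 α * n ^ (α + a - b * (α + 1)))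
      atTop (nhds 0) := by
    have := (tendsto_rpow_neg_atTop (y := -(α + a - b * (α + 1)))
      (by linarith)).const_mul (c * max 1 α)
    simpa using this
  have h2 : Tendsto (fun n : ℝ => 2 * Real.exp (-(c * 2 ^ (-α)) * n ^ ((1 - b) * α)))
      atTop (nhds 0) := by
    have h3 : Tendsto (fun n : ℝ => n ^ ((1 - b) * α)) atTop atTop :=
      tendsto_rpow_atTop hγ
    have hneg : -(c * 2 ^ (-(α : ℝ))) < 0 := by
      have : (0 : ℝ) < c * 2 ^ (-(α : ℝ)) := by positivity
      linarith
    have h4 : Tendsto (fun n : ℝ => -(c * 2 ^ (-α)) * n ^ ((1 - b) * α)) atTop atBot :=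
      (tendsto_const_mul_atBot_of_neg hneg).mpr h3
    have h5 := Real.tendsto_exp_atBot.comp h4
    have := h5.const_mul (2 : ℝ)
    simpa [Function.comp] using this
  have hsum : Tendsto (fun n : ℝ => c * max 1 α * n ^ (α + a - b * (α + 1)) +
      2 * Real.exp (-(c * 2 ^ (-α)) * n ^ ((1 - b) * α))) atTop (nhds 0) := by
    simpa using h1.add h2
  have hev : ∀ᶠ n : ℝ in atTop, (c * max 1 α * n ^ (α + a - b * (α + 1)) +
      2 * Real.exp (-(c * 2 ^ (-α)) * n ^ ((1 - b) * α))) < ε :=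
    hsum.eventually (gt_mem_nhds hε)
  obtain ⟨N, hN⟩ := eventually_atTop.mp (hev.and (eventually_ge_atTop (1 : ℝ)))
  refine ⟨N, fun n hn x y hx hy hxn hyn hd => ?_⟩
  obtain ⟨hfε, hn1⟩ := hN n hn
  rcases le_total ‖y‖ ‖x‖ with hyx | hxy
  · exact lt_of_le_of_lt (key_est α c a b hα hc hab n hn1 x y hx hy hd hyx) hfε
  · rw [abs_sub_comm]
    have hd' : ‖y - x‖ ≤ n ^ a := by rwa [norm_sub_rev]
    exact lt_of_le_of_lt (key_est α c a b hα hc hab n hn1 y x hy hx hd' hxy) hfε
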